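/- Let 𝒟 be a neighborhood closed collection of families of nonempty subsets of X, let Φ be a continuous periodic cocycle on X with period T > 0, and suppose Φ has a 𝒟-pullback attractor 𝒜 ∈ 𝒟. Then 𝒜 is periodic with period T (i.e. 𝒜(θ₁(T)ω₁,ω₂) = 𝒜(ω₁,ω₂) for all ω₁, ω₂) if and only if Φ has a closed measurable 𝒟-pullback absorbing set K ∈ 𝒟 with K periodic with period T (i.e. K(θ₁(T)ω₁,ω₂) = K(ω₁,ω₂) for all ω₁, ω₂). -/

import Mathlib

/-!
If `𝒜` is `T`-periodic, then so is the closure of its `δ`-thickening; for `δ` below the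
neighbourhood-closedness radius of `𝒜` this family lies in `𝒟`, and it absorbs because `𝒜`
attracts every member of `𝒟`. Its distance function is measurable since, over a countable dense
subset of `X`, it is a countable infimum of functions of the distance functions of `𝒜`.
Conversely, every absorbing set `K` contains `𝒜` by invariance, so `𝒜` is the Ω-limit set of
`K`; the Ω-limit set of a `T`-periodic family under a `T`-periodic cocycle is `T`-periodic.
-/

open MeasureTheory Filter Set Topology
open scoped ENNReal

namespace RDS

/-- A group of transformations of `α` parametrized by `ℝ`. -/
def IsGroupAction {α : Type*} (θ : ℝ → α → α) : Prop :=
  (∀ a, θ 0 a = a) ∧ ∀ s t : ℝ, ∀ a, θ (s + t) a = θ t (θ s a)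

variable {Ω₁ Ω₂ X : Type*} [MetricSpace X] [MeasurableSpace X] [MeasurableSpace Ω₂]

/-- A continuous cocycle on `X` over the parametric dynamical systems
`(Ω₁, θ₁)` and `(Ω₂, ℱ₂, P, θ₂)` (Definition 2.1). -/
structure IsCocycle (θ₁ : ℝ → Ω₁ → Ω₁) (θ₂ : ℝ → Ω₂ → Ω₂)
    (Φ : ℝ → Ω₁ → Ω₂ → X → X) : Prop where
  measurable : ∀ ω₁ : Ω₁,
    Measurable fun p : {t : ℝ // 0 ≤ t} × Ω₂ × X => Φ p.1.1 ω₁ p.2.1 p.2.2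
  map_zero : ∀ (ω₁ : Ω₁) (ω₂ : Ω₂) (x : X), Φ 0 ω₁ ω₂ x = x
  cocycle : ∀ t τ : ℝ, 0 ≤ t → 0 ≤ τ → ∀ (ω₁ : Ω₁) (ω₂ : Ω₂) (x : X),
    Φ (t + τ) ω₁ ω₂ x = Φ t (θ₁ τ ω₁) (θ₂ τ ω₂) (Φ τ ω₁ ω₂ x)
  continuous : ∀ t : ℝ, 0 ≤ t → ∀ (ω₁ : Ω₁) (ω₂ : Ω₂),
    Continuous fun x : X => Φ t ω₁ ω₂ x

/-- A complete orbit of the cocycle `Φ` (Definition 2.9). -/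
def IsCompleteOrbit (θ₁ : ℝ → Ω₁ → Ω₁) (θ₂ : ℝ → Ω₂ → Ω₂)
    (Φ : ℝ → Ω₁ → Ω₂ → X → X) (ψ : ℝ → Ω₁ → Ω₂ → X) : Prop :=
  ∀ t τ : ℝ, 0 ≤ t → ∀ (ω₁ : Ω₁) (ω₂ : Ω₂),
    Φ t (θ₁ τ ω₁) (θ₂ τ ω₂) (ψ τ ω₁ ω₂) = ψ (t + τ) ω₁ ω₂

/-- A `𝒟`-complete orbit of `Φ`. -/
def IsDCompleteOrbit (θ₁ : ℝ → Ω₁ → Ω₁) (θ₂ : ℝ → Ω₂ → Ω₂)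
    (Φ : ℝ → Ω₁ → Ω₂ → X → X) (𝒟 : Set (Ω₁ → Ω₂ → Set X))
    (ψ : ℝ → Ω₁ → Ω₂ → X) : Prop :=
  IsCompleteOrbit θ₁ θ₂ Φ ψ ∧
    ∃ D ∈ 𝒟, ∀ (t : ℝ) (ω₁ : Ω₁) (ω₂ : Ω₂), ψ t ω₁ ω₂ ∈ D (θ₁ t ω₁) (θ₂ t ω₂)

/-- Positive invariance of a family under `Φ`. -/
def PositivelyInvariant (θ₁ : ℝ → Ω₁ → Ω₁) (θ₂ : ℝ → Ω₂ → Ω₂)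
    (Φ : ℝ → Ω₁ → Ω₂ → X → X) (B : Ω₁ → Ω₂ → Set X) : Prop :=
  ∀ t : ℝ, 0 ≤ t → ∀ (ω₁ : Ω₁) (ω₂ : Ω₂),
    Φ t ω₁ ω₂ '' B ω₁ ω₂ ⊆ B (θ₁ t ω₁) (θ₂ t ω₂)

/-- Invariance of a family under `Φ`. -/
def Invariant (θ₁ : ℝ → Ω₁ → Ω₁) (θ₂ : ℝ → Ω₂ → Ω₂)
    (Φ : ℝ → Ω₁ → Ω₂ → X → X) (B : Ω₁ → Ω₂ → Set X) : Prop :=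
  ∀ t : ℝ, 0 ≤ t → ∀ (ω₁ : Ω₁) (ω₂ : Ω₂),
    Φ t ω₁ ω₂ '' B ω₁ ω₂ = B (θ₁ t ω₁) (θ₂ t ω₂)

/-- Quasi-invariance of a family under `Φ`. -/
def QuasiInvariant (θ₁ : ℝ → Ω₁ → Ω₁) (θ₂ : ℝ → Ω₂ → Ω₂)
    (Φ : ℝ → Ω₁ → Ω₂ → X → X) (B : Ω₁ → Ω₂ → Set X) : Prop :=
  ∀ y : Ω₁ → Ω₂ → X, (∀ (ω₁ : Ω₁) (ω₂ : Ω₂), y ω₁ ω₂ ∈ B ω₁ ω₂) →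
    ∃ ψ : ℝ → Ω₁ → Ω₂ → X, IsCompleteOrbit θ₁ θ₂ Φ ψ ∧
      (∀ (ω₁ : Ω₁) (ω₂ : Ω₂), ψ 0 ω₁ ω₂ = y ω₁ ω₂) ∧
      ∀ (t : ℝ) (ω₁ : Ω₁) (ω₂ : Ω₂), ψ t ω₁ ω₂ ∈ B (θ₁ t ω₁) (θ₂ t ω₂)

/-- The Ω-limit set of a family `B` (Definition 2.13). -/
def omegaLimit (θ₁ : ℝ → Ω₁ → Ω₁) (θ₂ : ℝ → Ω₂ → Ω₂)
    (Φ : ℝ → Ω₁ → Ω₂ → X → X) (B : Ω₁ → Ω₂ → Set X) (ω₁ : Ω₁) (ω₂ : Ω₂) : Set X :=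
  ⋂ τ ∈ Ici (0 : ℝ), closure (⋃ t ∈ Ici τ,
    Φ t (θ₁ (-t) ω₁) (θ₂ (-t) ω₂) '' B (θ₁ (-t) ω₁) (θ₂ (-t) ω₂))

/-- `𝒟` is a collection of families of nonempty subsets of `X`. -/
def FamiliesOfNonemptySets (𝒟 : Set (Ω₁ → Ω₂ → Set X)) : Prop :=
  ∀ D ∈ 𝒟, ∀ (ω₁ : Ω₁) (ω₂ : Ω₂), (D ω₁ ω₂).Nonempty

/-- Neighborhood closedness of the collection `𝒟` (Definition 2.5). -/
def NeighborhoodClosed (𝒟 : Set (Ω₁ → Ω₂ → Set X)) : Prop :=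
  ∀ D ∈ 𝒟, ∃ ε : ℝ, 0 < ε ∧ ∀ B : Ω₁ → Ω₂ → Set X,
    (∀ (ω₁ : Ω₁) (ω₂ : Ω₂), (B ω₁ ω₂).Nonempty ∧
      B ω₁ ω₂ ⊆ Metric.thickening ε (D ω₁ ω₂)) → B ∈ 𝒟

/-- Inclusion closedness of the collection `𝒟`. -/
def InclusionClosed (𝒟 : Set (Ω₁ → Ω₂ → Set X)) : Prop :=
  ∀ D ∈ 𝒟, ∀ B : Ω₁ → Ω₂ → Set X,
    (∀ (ω₁ : Ω₁) (ω₂ : Ω₂), (B ω₁ ω₂).Nonempty ∧ B ω₁ ω₂ ⊆ D ω₁ ω₂) → B ∈ 𝒟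

/-- `𝒟`-pullback asymptotic compactness of `Φ` (Definition 2.16). -/
def AsymptoticallyCompact (θ₁ : ℝ → Ω₁ → Ω₁) (θ₂ : ℝ → Ω₂ → Ω₂)
    (Φ : ℝ → Ω₁ → Ω₂ → X → X) (𝒟 : Set (Ω₁ → Ω₂ → Set X)) : Prop :=
  ∀ (ω₁ : Ω₁) (ω₂ : Ω₂), ∀ B ∈ 𝒟, ∀ (t : ℕ → ℝ) (x : ℕ → X),
    Tendsto t atTop atTop →
    (∀ n, x n ∈ B (θ₁ (-t n) ω₁) (θ₂ (-t n) ω₂)) →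
    ∃ (φ : ℕ → ℕ) (y : X), StrictMono φ ∧
      Tendsto (fun n => Φ (t (φ n)) (θ₁ (-t (φ n)) ω₁) (θ₂ (-t (φ n)) ω₂) (x (φ n)))
        atTop (𝓝 y)

/-- The Hausdorff semi-metric `d(C,B) = sup_{x ∈ C} inf_{b ∈ B} d(x,b)`,
valued in `ℝ≥0∞`. -/
noncomputable def hausSemidist (C B : Set X) : ℝ≥0∞ :=
  ⨆ x ∈ C, EMetric.infEdist x B

/-- The family `A` pullback attracts the family `B` under `Φ`. -/
def Attracts (θ₁ : ℝ → Ω₁ → Ω₁) (θ₂ : ℝ → Ω₂ → Ω₂)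
    (Φ : ℝ → Ω₁ → Ω₂ → X → X) (B A : Ω₁ → Ω₂ → Set X) : Prop :=
  ∀ (ω₁ : Ω₁) (ω₂ : Ω₂),
    Tendsto (fun t : ℝ => hausSemidist
        (Φ t (θ₁ (-t) ω₁) (θ₂ (-t) ω₂) '' B (θ₁ (-t) ω₁) (θ₂ (-t) ω₂)) (A ω₁ ω₂))
      atTop (𝓝 0)

/-- A `𝒟`-pullback absorbing set for `Φ` (Definition 2.15). -/
def IsAbsorbingSet (θ₁ : ℝ → Ω₁ → Ω₁) (θ₂ : ℝ → Ω₂ → Ω₂)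
    (Φ : ℝ → Ω₁ → Ω₂ → X → X) (𝒟 : Set (Ω₁ → Ω₂ → Set X))
    (K : Ω₁ → Ω₂ → Set X) : Prop :=
  K ∈ 𝒟 ∧ ∀ (ω₁ : Ω₁) (ω₂ : Ω₂), ∀ B ∈ 𝒟, ∃ T : ℝ, 0 < T ∧ ∀ t : ℝ, T ≤ t →
    Φ t (θ₁ (-t) ω₁) (θ₂ (-t) ω₂) '' B (θ₁ (-t) ω₁) (θ₂ (-t) ω₂) ⊆ K ω₁ ω₂

/-- A closed measurable (w.r.t. the `P`-completion of `ℱ₂`) `𝒟`-pullback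
absorbing set for `Φ`. -/
def IsClosedMeasurableAbsorbingSet (θ₁ : ℝ → Ω₁ → Ω₁) (θ₂ : ℝ → Ω₂ → Ω₂)
    (Φ : ℝ → Ω₁ → Ω₂ → X → X) (P : Measure Ω₂) (𝒟 : Set (Ω₁ → Ω₂ → Set X))
    (K : Ω₁ → Ω₂ → Set X) : Prop :=
  IsAbsorbingSet θ₁ θ₂ Φ 𝒟 K ∧
    (∀ (ω₁ : Ω₁) (ω₂ : Ω₂), IsClosed (K ω₁ ω₂) ∧ (K ω₁ ω₂).Nonempty) ∧
    ∀ (ω₁ : Ω₁) (x : X), NullMeasurable (fun ω₂ => Metric.infDist x (K ω₁ ω₂)) P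

/-- A `𝒟`-pullback attractor for `Φ` (Definition 2.17). -/
structure IsPullbackAttractor (θ₁ : ℝ → Ω₁ → Ω₁) (θ₂ : ℝ → Ω₂ → Ω₂)
    (Φ : ℝ → Ω₁ → Ω₂ → X → X) (P : Measure Ω₂) (𝒟 : Set (Ω₁ → Ω₂ → Set X))
    (A : Ω₁ → Ω₂ → Set X) : Prop where
  mem : A ∈ 𝒟
  compact : ∀ (ω₁ : Ω₁) (ω₂ : Ω₂), IsCompact (A ω₁ ω₂)
  measurable : ∀ (ω₁ : Ω₁) (x : X),
    NullMeasurable (fun ω₂ => Metric.infDist x (A ω₁ ω₂)) P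
  invariant : Invariant θ₁ θ₂ Φ A
  attracts : ∀ B ∈ 𝒟, Attracts θ₁ θ₂ Φ B A

section Measurability

open Metric

lemma infEDist_open_inter_dense {Y : Type*} [PseudoEMetricSpace Y] {D U : Set Y}
    (hD : Dense D) (hU : IsOpen U) (x : Y) : infEDist x (U ∩ D) = infEDist x U := by
  refine le_antisymm ?_ (infEDist_anti inter_subset_left)
  rw [← infEDist_closure (s := U ∩ D)]
  exact infEDist_anti (hD.open_subset_closure_inter hU)

lemma infEDist_thickening_eq_iInf_dense {Y : Type*} [PseudoMetricSpace Y] {D S : Set Y}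
    (hD : Dense D) (hS : S.Nonempty) (δ : ℝ) (x : Y) :
    infEDist x (thickening δ S) =
      ⨅ y : D, if infDist (y : Y) S < δ then edist x y else ⊤ := by
  rw [← infEDist_open_inter_dense hD isOpen_thickening, inter_comm]
  simp only [infEDist, mem_inter_iff, iInf_and, mem_thickening_iff_infDist_lt hS]
  rw [iInf_subtype']
  simp only [iInf_eq_if]

lemma nullMeasurable_infDist_closure_thickening {α Y : Type*} [MeasurableSpace α]
    [PseudoMetricSpace Y] [SecondCountableTopology Y] {μ : Measure α} {S : α → Set Y}
    (hS : ∀ a, (S a).Nonempty) (hS_meas : ∀ y, NullMeasurable (fun a => infDist y (S a)) μ)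
    (δ : ℝ) (x : Y) : NullMeasurable (fun a => infDist x (closure (thickening δ (S a)))) μ := by
  obtain ⟨D, hD_count, hD⟩ := TopologicalSpace.exists_countable_dense Y
  have : Countable D := hD_count.to_subtype
  have key : ∀ a, infDist x (closure (thickening δ (S a))) =
      (⨅ y : D, if infDist (y : Y) (S a) < δ then edist x y else ⊤).toReal := fun a => by
    rw [infDist_closure, infDist, infEDist_thickening_eq_iInf_dense hD (hS a)]
  simp_rw [key]
  -- `NullMeasurable` is `Measurable` for the completed σ-algebra, so `Measurable` lemmas apply.
  refine Measurable.ennreal_toReal <| Measurable.iInf fun y =>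
    Measurable.ite ?_ measurable_const measurable_const
  exact hS_meas y measurableSet_Iio

end Measurability

lemma IsGroupAction.apply_apply_neg {α : Type*} {θ : ℝ → α → α} (hθ : IsGroupAction θ)
    (s : ℝ) (a : α) : θ s (θ (-s) a) = a := by
  rw [← hθ.2, neg_add_cancel, hθ.1]

lemma IsGroupAction.apply_comm {α : Type*} {θ : ℝ → α → α} (hθ : IsGroupAction θ)
    (s t : ℝ) (a : α) : θ s (θ t a) = θ t (θ s a) := by
  rw [← hθ.2, ← hθ.2, add_comm]

lemma le_hausSemidist {X : Type*} [MetricSpace X] {C B : Set X} {y : X} (hy : y ∈ C) :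
    Metric.infEDist y B ≤ hausSemidist C B :=
  le_iSup₂ (f := fun z (_ : z ∈ C) => Metric.infEDist z B) y hy

section Dynamics

open Metric

variable {Ω₁ Ω₂ X : Type*} {θ₁ : ℝ → Ω₁ → Ω₁} {θ₂ : ℝ → Ω₂ → Ω₂} {Φ : ℝ → Ω₁ → Ω₂ → X → X}
  {𝒟 : Set (Ω₁ → Ω₂ → Set X)} {A B K : Ω₁ → Ω₂ → Set X}

lemma Invariant.image_pullback (hA : Invariant θ₁ θ₂ Φ A) (hθ₁ : IsGroupAction θ₁)
    (hθ₂ : IsGroupAction θ₂) {t : ℝ} (ht : 0 ≤ t) (ω₁ : Ω₁) (ω₂ : Ω₂) :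
    Φ t (θ₁ (-t) ω₁) (θ₂ (-t) ω₂) '' A (θ₁ (-t) ω₁) (θ₂ (-t) ω₂) = A ω₁ ω₂ := by
  rw [hA t ht, hθ₁.apply_apply_neg, hθ₂.apply_apply_neg]

lemma Invariant.subset_of_isAbsorbingSet (hA : Invariant θ₁ θ₂ Φ A) (hA𝒟 : A ∈ 𝒟)
    (hθ₁ : IsGroupAction θ₁) (hθ₂ : IsGroupAction θ₂) (hK : IsAbsorbingSet θ₁ θ₂ Φ 𝒟 K)
    (ω₁ : Ω₁) (ω₂ : Ω₂) : A ω₁ ω₂ ⊆ K ω₁ ω₂ := by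
  obtain ⟨t, ht, habs⟩ := hK.2 ω₁ ω₂ A hA𝒟
  rw [← hA.image_pullback hθ₁ hθ₂ ht.le]
  exact habs t le_rfl

variable [MetricSpace X]

lemma Invariant.subset_omegaLimit (hA : Invariant θ₁ θ₂ Φ A) (hθ₁ : IsGroupAction θ₁)
    (hθ₂ : IsGroupAction θ₂) (hAK : ∀ ω₁ ω₂, A ω₁ ω₂ ⊆ K ω₁ ω₂) (ω₁ : Ω₁) (ω₂ : Ω₂) :
    A ω₁ ω₂ ⊆ omegaLimit θ₁ θ₂ Φ K ω₁ ω₂ := by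
  refine subset_iInter₂ fun τ hτ => ?_
  rw [← hA.image_pullback hθ₁ hθ₂ hτ]
  exact fun x hx => subset_closure (mem_iUnion₂.2 ⟨τ, self_mem_Ici, image_mono (hAK _ _) hx⟩)

lemma Attracts.eventually_subset_thickening (h : Attracts θ₁ θ₂ Φ B A) (ω₁ : Ω₁) (ω₂ : Ω₂)
    {r : ℝ} (hr : 0 < r) : ∀ᶠ t in atTop,
      Φ t (θ₁ (-t) ω₁) (θ₂ (-t) ω₂) '' B (θ₁ (-t) ω₁) (θ₂ (-t) ω₂) ⊆ thickening r (A ω₁ ω₂) := by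
  filter_upwards [(h ω₁ ω₂).eventually (gt_mem_nhds (ENNReal.ofReal_pos.2 hr))] with t ht y hy
  exact mem_thickening_iff_infEDist_lt.2 ((le_hausSemidist hy).trans_lt ht)

lemma Attracts.omegaLimit_subset (h : Attracts θ₁ θ₂ Φ B A) (ω₁ : Ω₁) (ω₂ : Ω₂)
    (hA : IsClosed (A ω₁ ω₂)) : omegaLimit θ₁ θ₂ Φ B ω₁ ω₂ ⊆ A ω₁ ω₂ := by
  intro x hx
  rw [← hA.closure_eq, closure_eq_iInter_cthickening]
  refine mem_iInter₂.2 fun r hr => ?_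
  obtain ⟨τ, hτ⟩ := eventually_atTop.1
    ((h.eventually_subset_thickening ω₁ ω₂ hr).and (eventually_ge_atTop 0))
  refine closure_minimal (iUnion₂_subset fun t ht => ?_) isClosed_cthickening
    (mem_iInter₂.1 hx τ (hτ τ le_rfl).2)
  exact (hτ t ht).1.trans (thickening_subset_cthickening r _)

lemma IsPullbackAttractor.eq_omegaLimit [MeasurableSpace Ω₂] {P : Measure Ω₂}
    (hA : IsPullbackAttractor θ₁ θ₂ Φ P 𝒟 A) (hθ₁ : IsGroupAction θ₁) (hθ₂ : IsGroupAction θ₂)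
    (hK : IsAbsorbingSet θ₁ θ₂ Φ 𝒟 K) (ω₁ : Ω₁) (ω₂ : Ω₂) :
    A ω₁ ω₂ = omegaLimit θ₁ θ₂ Φ K ω₁ ω₂ :=
  (hA.invariant.subset_omegaLimit hθ₁ hθ₂
      (hA.invariant.subset_of_isAbsorbingSet hA.mem hθ₁ hθ₂ hK) ω₁ ω₂).antisymm
    ((hA.attracts K hK.1).omegaLimit_subset ω₁ ω₂ (hA.compact ω₁ ω₂).isClosed)

lemma omegaLimit_periodic (hθ₁ : IsGroupAction θ₁) {T : ℝ}
    (hper : ∀ t : ℝ, 0 ≤ t → ∀ (ω₁ : Ω₁) (ω₂ : Ω₂) (x : X), Φ t (θ₁ T ω₁) ω₂ x = Φ t ω₁ ω₂ x)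
    (hK : ∀ ω₁ ω₂, K (θ₁ T ω₁) ω₂ = K ω₁ ω₂) (ω₁ : Ω₁) (ω₂ : Ω₂) :
    omegaLimit θ₁ θ₂ Φ K (θ₁ T ω₁) ω₂ = omegaLimit θ₁ θ₂ Φ K ω₁ ω₂ := by
  refine iInter₂_congr fun τ hτ => congrArg closure (iUnion₂_congr fun t ht => ?_)
  rw [hθ₁.apply_comm, hK]
  exact image_congr fun y _ => hper t (le_trans hτ ht) _ _ _

lemma NeighborhoodClosed.exists_closure_thickening_mem (h𝒟 : NeighborhoodClosed 𝒟)
    (h𝒟ne : FamiliesOfNonemptySets 𝒟) (hA : A ∈ 𝒟) :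
    ∃ δ > 0, (fun ω₁ ω₂ => closure (thickening δ (A ω₁ ω₂))) ∈ 𝒟 := by
  obtain ⟨ε, hε, hnc⟩ := h𝒟 A hA
  refine ⟨ε / 2, half_pos hε, hnc _ fun ω₁ ω₂ => ⟨?_, ?_⟩⟩
  · exact (thickening_nonempty_iff.2 ⟨half_pos hε, h𝒟ne A hA ω₁ ω₂⟩).closure
  · exact (closure_thickening_subset_cthickening _ _).trans
      (cthickening_subset_thickening' hε (half_lt_self hε) _)

lemma isAbsorbingSet_closure_thickening (hA : ∀ B ∈ 𝒟, Attracts θ₁ θ₂ Φ B A) {δ : ℝ}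
    (hδ : 0 < δ) (hK : (fun ω₁ ω₂ => closure (thickening δ (A ω₁ ω₂))) ∈ 𝒟) :
    IsAbsorbingSet θ₁ θ₂ Φ 𝒟 fun ω₁ ω₂ => closure (thickening δ (A ω₁ ω₂)) := by
  refine ⟨hK, fun ω₁ ω₂ B hB => ?_⟩
  obtain ⟨T, hT⟩ := eventually_atTop.1
    (((hA B hB).eventually_subset_thickening ω₁ ω₂ hδ).and (eventually_gt_atTop 0))
  exact ⟨T, (hT T le_rfl).2, fun t ht => (hT t ht).1.trans subset_closure⟩

lemma IsPullbackAttractor.isClosedMeasurableAbsorbingSet_closure_thickening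
    [SecondCountableTopology X] [MeasurableSpace Ω₂] {P : Measure Ω₂}
    (hA : IsPullbackAttractor θ₁ θ₂ Φ P 𝒟 A) (h𝒟ne : FamiliesOfNonemptySets 𝒟) {δ : ℝ}
    (hδ : 0 < δ) (hK : (fun ω₁ ω₂ => closure (thickening δ (A ω₁ ω₂))) ∈ 𝒟) :
    IsClosedMeasurableAbsorbingSet θ₁ θ₂ Φ P 𝒟 fun ω₁ ω₂ => closure (thickening δ (A ω₁ ω₂)) :=
  ⟨isAbsorbingSet_closure_thickening hA.attracts hδ hK,
    fun ω₁ ω₂ => ⟨isClosed_closure, h𝒟ne _ hK ω₁ ω₂⟩,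
    fun ω₁ => nullMeasurable_infDist_closure_thickening (h𝒟ne A hA.mem ω₁) (hA.measurable ω₁) δ⟩

end Dynamics

theorem periodic_attractor_iff_periodic_absorbing_general
    {Ω₁ Ω₂ X : Type*}
    [MetricSpace X] [SecondCountableTopology X]
    [MeasurableSpace Ω₂] (P : Measure Ω₂)
    (θ₁ : ℝ → Ω₁ → Ω₁) (θ₂ : ℝ → Ω₂ → Ω₂)
    (hθ₁ : IsGroupAction θ₁) (hθ₂ : IsGroupAction θ₂)
    (Φ : ℝ → Ω₁ → Ω₂ → X → X)
    (T : ℝ)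
    (hper : ∀ t : ℝ, 0 ≤ t → ∀ (ω₁ : Ω₁) (ω₂ : Ω₂) (x : X),
      Φ t (θ₁ T ω₁) ω₂ x = Φ t ω₁ ω₂ x)
    (𝒟 : Set (Ω₁ → Ω₂ → Set X))
    (h𝒟ne : FamiliesOfNonemptySets 𝒟)
    (h𝒟nc : NeighborhoodClosed 𝒟)
    (A : Ω₁ → Ω₂ → Set X)
    (hA : IsPullbackAttractor θ₁ θ₂ Φ P 𝒟 A) :
    (∀ (ω₁ : Ω₁) (ω₂ : Ω₂), A (θ₁ T ω₁) ω₂ = A ω₁ ω₂) ↔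
      ∃ K : Ω₁ → Ω₂ → Set X, IsClosedMeasurableAbsorbingSet θ₁ θ₂ Φ P 𝒟 K ∧
        ∀ (ω₁ : Ω₁) (ω₂ : Ω₂), K (θ₁ T ω₁) ω₂ = K ω₁ ω₂ := by
  constructor
  · intro hA_per
    obtain ⟨δ, hδ, hK⟩ := h𝒟nc.exists_closure_thickening_mem h𝒟ne hA.mem
    refine ⟨_, hA.isClosedMeasurableAbsorbingSet_closure_thickening h𝒟ne hδ hK,
      fun ω₁ ω₂ => ?_⟩
    simp only [hA_per]
  · rintro ⟨K, hK, hK_per⟩ ω₁ ω₂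
    rw [hA.eq_omegaLimit hθ₁ hθ₂ hK.1, hA.eq_omegaLimit hθ₁ hθ₂ hK.1,
      omegaLimit_periodic hθ₁ hper hK_per]

theorem periodic_attractor_iff_periodic_absorbing
    {Ω₁ Ω₂ X : Type*} [Nonempty Ω₁]
    [MetricSpace X] [CompleteSpace X] [SecondCountableTopology X]
    [MeasurableSpace X] [BorelSpace X]
    [MeasurableSpace Ω₂] (P : Measure Ω₂) [IsProbabilityMeasure P]
    (θ₁ : ℝ → Ω₁ → Ω₁) (θ₂ : ℝ → Ω₂ → Ω₂)
    (hθ₁ : IsGroupAction θ₁) (hθ₂ : IsGroupAction θ₂)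
    (hθ₂meas : Measurable fun p : ℝ × Ω₂ => θ₂ p.1 p.2)
    (hθ₂pres : ∀ t : ℝ, MeasurePreserving (θ₂ t) P P)
    (Φ : ℝ → Ω₁ → Ω₂ → X → X)
    (hΦ : IsCocycle θ₁ θ₂ Φ)
    (T : ℝ) (hT : 0 < T)
    (hper : ∀ t : ℝ, 0 ≤ t → ∀ (ω₁ : Ω₁) (ω₂ : Ω₂) (x : X),
      Φ t (θ₁ T ω₁) ω₂ x = Φ t ω₁ ω₂ x)
    (𝒟 : Set (Ω₁ → Ω₂ → Set X))
    (h𝒟ne : FamiliesOfNonemptySets 𝒟)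
    (h𝒟nc : NeighborhoodClosed 𝒟)
    (A : Ω₁ → Ω₂ → Set X)
    (hA : IsPullbackAttractor θ₁ θ₂ Φ P 𝒟 A) :
    (∀ (ω₁ : Ω₁) (ω₂ : Ω₂), A (θ₁ T ω₁) ω₂ = A ω₁ ω₂) ↔
      ∃ K : Ω₁ → Ω₂ → Set X, IsClosedMeasurableAbsorbingSet θ₁ θ₂ Φ P 𝒟 K ∧
        ∀ (ω₁ : Ω₁) (ω₂ : Ω₂), K (θ₁ T ω₁) ω₂ = K ω₁ ω₂ :=
  periodic_attractor_iff_periodic_absorbing_general P θ₁ θ₂ hθ₁ hθ₂ Φ T hper 𝒟 h𝒟ne h𝒟nc A hA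

end RDS
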